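/- Let G be a digraph with signless Laplacian Q(G) = D(G) + A(G). Then q(G) ≤ max over vertices v_i of (d_i^+ + m_i^+), where m_i^+ = (Σ_{v_j: (v_i,v_j)∈E(G)} d_j^+)/d_i^+ is the average 2-outdegree of v_i. -/

import Mathlib

open Matrix Finset

/-- Spectral radius of a complex square matrix: the largest modulus of its eigenvalues. -/
noncomputable def specRad {n : ℕ} (M : Matrix (Fin n) (Fin n) ℂ) : ℝ :=
  sSup {x : ℝ | ∃ μ ∈ spectrum ℂ M, x = ‖μ‖}

/-- Spectral radius of a real square matrix (via its complex eigenvalues). -/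
noncomputable def specRadR {n : ℕ} (M : Matrix (Fin n) (Fin n) ℝ) : ℝ :=
  specRad (M.map Complex.ofReal)

/-- Adjacency matrix of a digraph given by its arc relation. -/
def adjM {n : ℕ} (E : Fin n → Fin n → Prop) [DecidableRel E] :
    Matrix (Fin n) (Fin n) ℝ := fun i j => if E i j then 1 else 0

/-- Outdegree of vertex `i`. -/
def outdeg {n : ℕ} (E : Fin n → Fin n → Prop) [DecidableRel E] (i : Fin n) : ℕ :=
  (Finset.univ.filter (fun j => E i j)).card

/-- Signless Laplacian `Q(G) = D(G) + A(G)`. -/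
noncomputable def Qmat {n : ℕ} (E : Fin n → Fin n → Prop) [DecidableRel E] :
    Matrix (Fin n) (Fin n) ℝ :=
  Matrix.diagonal (fun i => (outdeg E i : ℝ)) + adjM E

/-- Signless Laplacian spectral radius `q(G)`. -/
noncomputable def qG {n : ℕ} (E : Fin n → Fin n → Prop) [DecidableRel E] : ℝ :=
  specRadR (Qmat E)

/-- Average 2-outdegree `m_i^+`. -/
noncomputable def m2 {n : ℕ} (E : Fin n → Fin n → Prop) [DecidableRel E] (i : Fin n) : ℝ :=
  (∑ j ∈ Finset.univ.filter (fun j => E i j), (outdeg E j : ℝ)) / (outdeg E i : ℝ)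

/-- The finset of arcs of the digraph. -/
def arcs {n : ℕ} (E : Fin n → Fin n → Prop) [DecidableRel E] : Finset (Fin n × Fin n) :=
  Finset.univ.filter (fun p => E p.1 p.2)

/-- Strong connectivity of a digraph. -/
def StrongConn {n : ℕ} (E : Fin n → Fin n → Prop) : Prop :=
  ∀ i j : Fin n, Relation.ReflTransGen E i j

/-- Irreducibility of a square matrix: the digraph of nonzero entries is strongly connected. -/
def MatIrred {n : ℕ} {α : Type*} [Zero α] (M : Matrix (Fin n) (Fin n) α) : Prop :=
  ∀ i j : Fin n, i ≠ j → Relation.TransGen (fun a b => M a b ≠ 0) i j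

/-!
Write `d` for the outdegree vector. Row `i` of `Q(G) d` is `d_i² + Σ_{i→j} d_j = (d_i + m_i⁺) d_i`,
so `Q d ≤ c d` entrywise for `c = max_i (d_i + m_i⁺)`. For a nonnegative matrix `A` and a positive
vector `x` with `A x ≤ c x`, any eigenpair `A v = μ v` gives `|μ| ≤ c`: evaluate the eigen-equation
at an index maximising `|v_i| / x_i`.
-/

lemma Matrix.exists_mulVec_eq_smul_of_mem_spectrum {ι K : Type*} [Fintype ι] [DecidableEq ι]
    [Field K] {M : Matrix ι ι K} {μ : K} (h : μ ∈ spectrum K M) :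
    ∃ v : ι → K, v ≠ 0 ∧ M *ᵥ v = μ • v := by
  rw [← Matrix.spectrum_toLin', ← Module.End.hasEigenvalue_iff_mem_spectrum] at h
  obtain ⟨v, hv⟩ := h.exists_hasEigenvector
  exact ⟨v, hv.2, by simpa using hv.apply_eq_smul⟩

section CollatzWielandt

variable {ι : Type*} [Fintype ι] {A : Matrix ι ι ℝ} {x : ι → ℝ} {c : ℝ}

lemma norm_le_of_mulVec_le_smul (hA : ∀ i j, 0 ≤ A i j) (hx : ∀ i, 0 < x i)
    (hAx : ∀ i, (A *ᵥ x) i ≤ c * x i) {μ : ℂ} {v : ι → ℂ} (hv : v ≠ 0)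
    (hμ : A.map Complex.ofReal *ᵥ v = μ • v) : ‖μ‖ ≤ c := by
  obtain ⟨k, hk⟩ := Function.ne_iff.mp hv
  obtain ⟨i, -, hi⟩ := Finset.exists_max_image univ (fun j => ‖v j‖ / x j) ⟨k, mem_univ k⟩
  set t := ‖v i‖ / x i
  have hvj : ∀ j, ‖v j‖ ≤ x j * t := fun j =>
    (div_le_iff₀' (hx j)).mp (hi j (mem_univ j))
  have ht : 0 < t := (div_pos (norm_pos_iff.mpr hk) (hx k)).trans_le (hi k (mem_univ k))
  have hvi : ‖v i‖ = t * x i := by simp only [t, div_mul_cancel₀ _ (hx i).ne']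
  have key : ‖μ‖ * ‖v i‖ ≤ c * ‖v i‖ :=
    calc ‖μ‖ * ‖v i‖ = ‖∑ j, (A i j : ℂ) * v j‖ := by
          rw [← norm_mul, ← smul_eq_mul, ← Pi.smul_apply, ← hμ]; rfl
      _ ≤ ∑ j, A i j * ‖v j‖ := by
          refine (norm_sum_le _ _).trans_eq (sum_congr rfl fun j _ => ?_)
          rw [norm_mul, Complex.norm_real, Real.norm_of_nonneg (hA i j)]
      _ ≤ ∑ j, A i j * (x j * t) :=
          sum_le_sum fun j _ => mul_le_mul_of_nonneg_left (hvj j) (hA i j)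
      _ = t * (A *ᵥ x) i := by
          simp only [mulVec, dotProduct, mul_sum]; exact sum_congr rfl fun j _ => by ring
      _ ≤ t * (c * x i) := mul_le_mul_of_nonneg_left (hAx i) ht.le
      _ = c * ‖v i‖ := by rw [hvi]; ring
  exact le_of_mul_le_mul_right key (hvi ▸ mul_pos ht (hx i))

lemma specRadR_le_of_mulVec_le_smul {n : ℕ} (hn : 0 < n) {A : Matrix (Fin n) (Fin n) ℝ}
    {x : Fin n → ℝ} (hA : ∀ i j, 0 ≤ A i j) (hx : ∀ i, 0 < x i)
    (hAx : ∀ i, (A *ᵥ x) i ≤ c * x i) : specRadR A ≤ c := by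
  have hc : 0 ≤ c := by
    have h0 := hAx ⟨0, hn⟩
    have : 0 ≤ (A *ᵥ x) ⟨0, hn⟩ :=
      dotProduct_nonneg_of_nonneg (hA ⟨0, hn⟩) fun j => (hx j).le
    exact nonneg_of_mul_nonneg_left (this.trans h0) (hx _)
  refine Real.sSup_le ?_ hc
  rintro _ ⟨μ, hμ, rfl⟩
  obtain ⟨v, hv, hμv⟩ := Matrix.exists_mulVec_eq_smul_of_mem_spectrum hμ
  exact norm_le_of_mulVec_le_smul hA hx hAx hv hμv

end CollatzWielandt

section SignlessLaplacian

variable {n : ℕ} (E : Fin n → Fin n → Prop) [DecidableRel E]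

lemma Qmat_nonneg (i j : Fin n) : 0 ≤ Qmat E i j := by
  simp only [Qmat, Matrix.add_apply, diagonal_apply, adjM]
  positivity

lemma Qmat_mulVec_outdeg {i : Fin n} (hi : 0 < outdeg E i) :
    (Qmat E *ᵥ fun j => (outdeg E j : ℝ)) i
      = ((outdeg E i : ℝ) + m2 E i) * outdeg E i := by
  have hm : m2 E i * outdeg E i = ∑ j ∈ univ.filter (E i), (outdeg E j : ℝ) :=
    div_mul_cancel₀ _ (by positivity)
  rw [add_mul, hm, Qmat, add_mulVec, Pi.add_apply, mulVec_diagonal]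
  simp only [mulVec, dotProduct, adjM, ite_mul, one_mul, zero_mul, sum_filter]

end SignlessLaplacian

theorem stmt_3_general {n : ℕ} (hn : 0 < n) (E : Fin n → Fin n → Prop) [DecidableRel E]
    (hdeg : ∀ i, 0 < outdeg E i) :
    qG E ≤ Finset.univ.sup' ⟨⟨0, hn⟩, Finset.mem_univ _⟩
      (fun i => (outdeg E i : ℝ) + m2 E i) := by
  refine specRadR_le_of_mulVec_le_smul hn (x := fun i => (outdeg E i : ℝ)) (Qmat_nonneg E)
    (fun i => by exact_mod_cast hdeg i)
    fun i => ?_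
  rw [Qmat_mulVec_outdeg E (hdeg i)]
  exact mul_le_mul_of_nonneg_right (le_sup' (fun i => (outdeg E i : ℝ) + m2 E i) (mem_univ i))
    (Nat.cast_nonneg _)

/-- `q(G) ≤ max{d_i⁺ + m_i⁺ : v_i ∈ V(G)}`. -/
theorem stmt_3 {n : ℕ} (hn : 0 < n) (E : Fin n → Fin n → Prop) [DecidableRel E]
    (hloop : ∀ i, ¬ E i i) (hdeg : ∀ i, 0 < outdeg E i) :
    qG E ≤ Finset.univ.sup' ⟨⟨0, hn⟩, Finset.mem_univ _⟩
      (fun i => (outdeg E i : ℝ) + m2 E i) :=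
  stmt_3_general hn E hdeg
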